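/- Let α ∈ (0,1), σ₀ > 0, and let b : [-σ₀,σ₀] → ℝ be C² with b(0) = 0 and b'(0) = 0 (e.g. b(σ) = ā(σ) − ā(0) − ā'(0)σ). Then the integral R(τ) := ∫_{-σ₀}^{σ₀} b(σ)·[ (σ²+τ²)^{-(1+α)/2} − |σ|^{-(1+α)} ] dσ satisfies |R(τ)| ≤ C‖b''‖_∞ τ^{2-α} for all sufficiently small τ > 0. -/

import Mathlib

/-!
Taylor's formula gives `|b σ| ≤ M σ²`. The kernel difference is bounded by `|σ|^(-(1+α))`, and,
by concavity of `r ↦ r^((1+α)/2)`, also by `τ² |σ|^(-(3+α))`. Integrating `M σ²` times the first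
bound over `|σ| ≤ τ` and times the second over `τ ≤ |σ| ≤ σ₀` each gives `O(M τ^(2-α))`.
-/

open MeasureTheory intervalIntegral Set

lemma abs_le_mul_sq_of_abs_deriv_deriv_le {b : ℝ → ℝ} {M : ℝ} (hb : Differentiable ℝ b)
    (hb' : Differentiable ℝ (deriv b)) (hb0 : b 0 = 0) (hb'0 : deriv b 0 = 0)
    (hbM : ∀ x, |deriv (deriv b) x| ≤ M) (x : ℝ) : |b x| ≤ M * x ^ 2 := by
  have hderiv : ∀ y, |deriv b y| ≤ M * |y| := fun y => by
    simpa [hb'0] using Convex.norm_image_sub_le_of_norm_deriv_le (fun z _ => hb' z)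
      (fun z _ => hbM z) convex_univ (mem_univ 0) (mem_univ y)
  have hderiv_on : ∀ y ∈ uIcc 0 x, ‖deriv b y‖ ≤ M * |x| := fun y hy =>
    (hderiv y).trans (mul_le_mul_of_nonneg_left (by simpa using abs_sub_left_of_mem_uIcc hy)
      ((abs_nonneg _).trans (hbM 0)))
  simpa [hb0, ← sq, mul_assoc] using Convex.norm_image_sub_le_of_norm_deriv_le
    (fun y _ => hb y) hderiv_on (convex_uIcc 0 x) left_mem_uIcc right_mem_uIcc

lemma integral_symm_eq_integral_comp_neg_add {E : Type*} [NormedAddCommGroup E] [NormedSpace ℝ E]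
    {f : ℝ → E} {a : ℝ} (h₁ : IntervalIntegrable f volume (-a) 0)
    (h₂ : IntervalIntegrable f volume 0 a) :
    ∫ x in -a..a, f x = (∫ x in (0 : ℝ)..a, f (-x)) + ∫ x in (0 : ℝ)..a, f x := by
  rw [← integral_add_adjacent_intervals h₁ h₂, integral_comp_neg, neg_zero]

noncomputable def kernelDiff (α τ σ : ℝ) : ℝ :=
  (σ ^ 2 + τ ^ 2) ^ (-(1 + α) / 2) - |σ| ^ (-(1 + α))

lemma kernelDiff_neg (α τ σ : ℝ) : kernelDiff α τ (-σ) = kernelDiff α τ σ := by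
  simp only [kernelDiff, neg_sq, abs_neg]

lemma abs_rpow_eq_sq_rpow (σ y : ℝ) : |σ| ^ y = (σ ^ 2) ^ (y / 2) := by
  rw [← sq_abs, ← Real.rpow_natCast, ← Real.rpow_mul (abs_nonneg σ)]
  norm_num [mul_div_cancel₀]

lemma rpow_neg_sub_rpow_neg_add_le {x t p : ℝ} (hx : 0 < x) (ht : 0 ≤ t) (hp : p ≤ 1) :
    x ^ (-p) - (x + t) ^ (-p) ≤ t * x ^ (-p - 1) := by
  have hxt : 0 < x + t := by linarith
  set r := x / (x + t) with hr
  have hr0 : 0 < r := by positivity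
  have hr1 : r ≤ 1 := (div_le_one hxt).mpr (by linarith)
  have hfactor : (x + t) ^ (-p) = x ^ (-p) * r ^ p := by
    rw [hr, Real.div_rpow hx.le hxt.le, Real.rpow_neg hx.le, Real.rpow_neg hxt.le]
    field_simp
  have hrp : r ≤ r ^ p := by
    simpa using Real.rpow_le_rpow_of_exponent_ge hr0 hr1 hp
  calc x ^ (-p) - (x + t) ^ (-p) = x ^ (-p) * (1 - r ^ p) := by rw [hfactor]; ring
    _ ≤ x ^ (-p) * (1 - r) := by gcongr
    _ = x ^ (-p) * (t / (x + t)) := by rw [hr]; field_simp; ring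
    _ ≤ x ^ (-p) * (t / x) := by gcongr; linarith
    _ = t * x ^ (-p - 1) := by
      rw [Real.rpow_sub_one hx.ne']
      ring

section kernel

variable {α τ σ M : ℝ} {c : ℝ → ℝ}

lemma abs_kernelDiff_eq (hα : -1 ≤ α) (hσ : σ ≠ 0) :
    |kernelDiff α τ σ| = (σ ^ 2) ^ (-((1 + α) / 2)) - (σ ^ 2 + τ ^ 2) ^ (-((1 + α) / 2)) := by
  have hle : (σ ^ 2 + τ ^ 2) ^ (-((1 + α) / 2)) ≤ (σ ^ 2) ^ (-((1 + α) / 2)) :=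
    Real.rpow_le_rpow_of_nonpos (by positivity) (by nlinarith) (by linarith)
  rw [kernelDiff, abs_rpow_eq_sq_rpow, abs_sub_comm, neg_div, abs_of_nonneg (by linarith)]

lemma abs_kernelDiff_le (hα : -1 ≤ α) (hσ : σ ≠ 0) : |kernelDiff α τ σ| ≤ |σ| ^ (-(1 + α)) := by
  rw [abs_kernelDiff_eq hα hσ, abs_rpow_eq_sq_rpow, neg_div, sub_le_self_iff]
  positivity

lemma abs_kernelDiff_le_sq_mul (hα : -1 ≤ α) (hα1 : α ≤ 1) (hσ : σ ≠ 0) :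
    |kernelDiff α τ σ| ≤ τ ^ 2 * |σ| ^ (-(3 + α)) := by
  rw [abs_kernelDiff_eq hα hσ, abs_rpow_eq_sq_rpow,
    show -(3 + α) / 2 = -((1 + α) / 2) - 1 by ring]
  exact rpow_neg_sub_rpow_neg_add_le (by positivity) (by positivity) (by linarith)

lemma abs_mul_kernelDiff_le_rpow (hα : -1 ≤ α) (hcq : ∀ x, |c x| ≤ M * x ^ 2)
    (σ : ℝ) : |c σ * kernelDiff α τ σ| ≤ M * |σ| ^ (1 - α) := by
  have hM : 0 ≤ M := by simpa using (abs_nonneg _).trans (hcq 1)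
  rcases eq_or_ne σ 0 with rfl | hσ
  · have hc0 : c 0 = 0 := abs_nonpos_iff.mp (by simpa using hcq 0)
    simp only [hc0, zero_mul, abs_zero]
    positivity
  calc |c σ * kernelDiff α τ σ| = |c σ| * |kernelDiff α τ σ| := abs_mul _ _
    _ ≤ M * σ ^ 2 * |σ| ^ (-(1 + α)) := by
      gcongr
      exacts [hcq σ, abs_kernelDiff_le hα hσ]
    _ = M * |σ| ^ (1 - α) := by
      rw [show 1 - α = -(1 + α) + (2 : ℕ) by push_cast; ring,
        Real.rpow_add_natCast (abs_ne_zero.mpr hσ), ← sq_abs]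
      ring

lemma abs_mul_kernelDiff_le_sq_mul_rpow (hα : -1 ≤ α) (hα1 : α ≤ 1)
    (hcq : ∀ x, |c x| ≤ M * x ^ 2) (hσ : σ ≠ 0) :
    |c σ * kernelDiff α τ σ| ≤ M * τ ^ 2 * |σ| ^ (-(1 + α)) := by
  have hM : 0 ≤ M := by simpa using (abs_nonneg _).trans (hcq 1)
  calc |c σ * kernelDiff α τ σ| = |c σ| * |kernelDiff α τ σ| := abs_mul _ _
    _ ≤ M * σ ^ 2 * (τ ^ 2 * |σ| ^ (-(3 + α))) := by
      gcongr
      exacts [hcq σ, abs_kernelDiff_le_sq_mul hα hα1 hσ]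
    _ = M * τ ^ 2 * |σ| ^ (-(1 + α)) := by
      rw [show -(1 + α) = -(3 + α) + (2 : ℕ) by push_cast; ring,
        Real.rpow_add_natCast (abs_ne_zero.mpr hσ), ← sq_abs]
      ring

lemma intervalIntegrable_mul_kernelDiff (hα : -1 ≤ α) (hα1 : α ≤ 1)
    (hc : Continuous c) (hcq : ∀ x, |c x| ≤ M * x ^ 2) (a b : ℝ) :
    IntervalIntegrable (fun σ => c σ * kernelDiff α τ σ) volume a b := by
  have hg : Continuous fun σ : ℝ => M * |σ| ^ (1 - α) :=
    continuous_const.mul (continuous_abs.rpow_const fun _ => Or.inr (by linarith))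
  refine (hg.intervalIntegrable a b).mono_fun ?_ (ae_of_all _ fun σ => ?_)
  · exact (hc.measurable.mul (by unfold kernelDiff; fun_prop)).aestronglyMeasurable
  · exact (abs_mul_kernelDiff_le_rpow hα hcq σ).trans (le_abs_self _)

lemma abs_integral_mul_kernelDiff_le_near {s : ℝ} (hα : -1 ≤ α) (hα2 : α < 2)
    (hcq : ∀ x, |c x| ≤ M * x ^ 2) (hs : 0 ≤ s) :
    |∫ σ in (0 : ℝ)..s, c σ * kernelDiff α τ σ| ≤ M * (s ^ (2 - α) / (2 - α)) := by
  have hbound : ∀ σ ∈ Ioc 0 s, ‖c σ * kernelDiff α τ σ‖ ≤ M * σ ^ (1 - α) := fun σ hσ => by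
    simpa [abs_of_pos hσ.1] using abs_mul_kernelDiff_le_rpow hα hcq σ
  have hint : IntervalIntegrable (fun σ : ℝ => M * σ ^ (1 - α)) volume 0 s :=
    (intervalIntegral.intervalIntegrable_rpow' (by linarith)).const_mul M
  refine (norm_integral_le_of_norm_le hs (ae_of_all _ hbound) hint).trans_eq ?_
  rw [intervalIntegral.integral_const_mul, integral_rpow (Or.inl (by linarith)),
    Real.zero_rpow (by linarith), show 1 - α + 1 = 2 - α by ring, sub_zero]

lemma abs_integral_mul_kernelDiff_le_tail {s t : ℝ} (hα : 0 < α) (hα1 : α ≤ 1)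
    (hcq : ∀ x, |c x| ≤ M * x ^ 2) (hs : 0 < s) (hst : s ≤ t) :
    |∫ σ in s..t, c σ * kernelDiff α τ σ| ≤ M * τ ^ 2 * (s ^ (-α) / α) := by
  have hM : 0 ≤ M := by simpa using (abs_nonneg _).trans (hcq 1)
  have h0 : (0 : ℝ) ∉ uIcc s t := by rw [uIcc_of_le hst]; exact fun h => hs.not_ge h.1
  have hbound : ∀ σ ∈ Ioc s t, ‖c σ * kernelDiff α τ σ‖ ≤ M * τ ^ 2 * σ ^ (-(1 + α)) :=
    fun σ hσ => by
      have hσ0 : 0 < σ := hs.trans hσ.1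
      simpa [abs_of_pos hσ0] using
        abs_mul_kernelDiff_le_sq_mul_rpow (by linarith) hα1 hcq hσ0.ne'
  have hint : IntervalIntegrable (fun σ : ℝ => M * τ ^ 2 * σ ^ (-(1 + α))) volume s t :=
    (intervalIntegral.intervalIntegrable_rpow (Or.inr h0)).const_mul _
  refine (norm_integral_le_of_norm_le hst (ae_of_all _ hbound) hint).trans ?_
  rw [intervalIntegral.integral_const_mul, integral_rpow (Or.inr ⟨by linarith, h0⟩),
    show -(1 + α) + 1 = -α by ring, div_neg, ← neg_div, neg_sub]
  gcongr
  exact sub_le_self _ (Real.rpow_nonneg (hs.trans_le hst).le _)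

lemma abs_integral_zero_mul_kernelDiff_le {σ₀ : ℝ} (hα : 0 < α) (hα1 : α ≤ 1)
    (hc : Continuous c) (hcq : ∀ x, |c x| ≤ M * x ^ 2) (hτ : 0 < τ) (hτσ₀ : τ ≤ σ₀) :
    |∫ σ in (0 : ℝ)..σ₀, c σ * kernelDiff α τ σ| ≤ (1 / (2 - α) + 1 / α) * M * τ ^ (2 - α) := by
  have hint := intervalIntegrable_mul_kernelDiff (τ := τ) (by linarith) hα1 hc hcq
  have hτpow : τ ^ 2 * τ ^ (-α) = τ ^ (2 - α) := by
    rw [show 2 - α = -α + (2 : ℕ) by push_cast; ring, Real.rpow_add_natCast hτ.ne']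
    ring
  rw [← integral_add_adjacent_intervals (hint 0 τ) (hint τ σ₀)]
  calc _ ≤ |∫ σ in (0 : ℝ)..τ, c σ * kernelDiff α τ σ|
          + |∫ σ in τ..σ₀, c σ * kernelDiff α τ σ| := abs_add_le _ _
    _ ≤ M * (τ ^ (2 - α) / (2 - α)) + M * τ ^ 2 * (τ ^ (-α) / α) :=
        add_le_add (abs_integral_mul_kernelDiff_le_near (by linarith) (by linarith) hcq hτ.le)
          (abs_integral_mul_kernelDiff_le_tail hα hα1 hcq hτ hτσ₀)
    _ = (1 / (2 - α) + 1 / α) * M * τ ^ (2 - α) := by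
      rw [← hτpow]
      ring

lemma abs_integral_symm_mul_kernelDiff_le {σ₀ : ℝ} (hα : 0 < α) (hα1 : α ≤ 1)
    (hc : Continuous c) (hcq : ∀ x, |c x| ≤ M * x ^ 2) (hτ : 0 < τ) (hτσ₀ : τ ≤ σ₀) :
    |∫ σ in -σ₀..σ₀, c σ * kernelDiff α τ σ| ≤ 2 * (1 / (2 - α) + 1 / α) * M * τ ^ (2 - α) := by
  have hint := intervalIntegrable_mul_kernelDiff (τ := τ) (by linarith) hα1 hc hcq
  rw [integral_symm_eq_integral_comp_neg_add (hint _ _) (hint _ _)]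
  simp only [kernelDiff_neg]
  have h_neg := abs_integral_zero_mul_kernelDiff_le (c := fun x => c (-x)) hα hα1
    (hc.comp continuous_neg) (fun x => by simpa using hcq (-x)) hτ hτσ₀
  have h_pos := abs_integral_zero_mul_kernelDiff_le hα hα1 hc hcq hτ hτσ₀
  linarith [abs_add_le (∫ σ in (0 : ℝ)..σ₀, c (-σ) * kernelDiff α τ σ)
    (∫ σ in (0 : ℝ)..σ₀, c σ * kernelDiff α τ σ)]

end kernel

theorem stmt9_general (α σ₀ M : ℝ) (hα : 0 < α) (hα1 : α < 1) (hσ₀ : 0 < σ₀)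
    (b : ℝ → ℝ) (hb : ContDiff ℝ 2 b) (hb0 : b 0 = 0) (hb'0 : deriv b 0 = 0)
    (hbM : ∀ x, |deriv (deriv b) x| ≤ M) :
    ∃ C > 0, ∃ τ₁ > 0, ∀ τ : ℝ, 0 < τ → τ < τ₁ →
      |∫ σ in (-σ₀)..σ₀,
          b σ * (((σ ^ 2 + τ ^ 2) ^ (-(1 + α) / 2) : ℝ) - |σ| ^ (-(1 + α)))|
        ≤ C * M * τ ^ (2 - α) := by
  have h2α : 0 < 2 - α := by linarith
  refine ⟨2 * (1 / (2 - α) + 1 / α), by positivity, σ₀, hσ₀, fun τ hτ hτσ₀ => ?_⟩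
  have hb' : Differentiable ℝ (deriv b) := by
    simpa using hb.differentiable_iteratedDeriv 1 (by norm_num)
  exact abs_integral_symm_mul_kernelDiff_le hα hα1.le hb.continuous
    (abs_le_mul_sq_of_abs_deriv_deriv_le (hb.differentiable two_ne_zero) hb' hb0 hb'0 hbM)
    hτ hτσ₀.le

theorem stmt9 (α σ₀ M : ℝ) (hα : 0 < α) (hα1 : α < 1) (hσ₀ : 0 < σ₀) (hM : 0 ≤ M)
    (b : ℝ → ℝ) (hb : ContDiff ℝ 2 b) (hb0 : b 0 = 0) (hb'0 : deriv b 0 = 0)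
    (hbM : ∀ x, |deriv (deriv b) x| ≤ M) :
    ∃ C > 0, ∃ τ₁ > 0, ∀ τ : ℝ, 0 < τ → τ < τ₁ →
      |∫ σ in (-σ₀)..σ₀,
          b σ * (((σ ^ 2 + τ ^ 2) ^ (-(1 + α) / 2) : ℝ) - |σ| ^ (-(1 + α)))|
        ≤ C * M * τ ^ (2 - α) :=
  stmt9_general α σ₀ M hα hα1 hσ₀ b hb hb0 hb'0 hbM
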